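/- arXiv:2101.05441 — 4 statements merged into one kernel-verified Lean document; each statement's English description precedes it below -/
import Mathlib

section
/- Let M be an atomic commutative cancellative monoid that is not factorial. Then M is length-factorial if and only if there exists an atom a of M_red such that both A(M_red) \ {a} and { a - b : b in A(M_red) \ {a} } are linearly independent sets over Z in the Grothendieck group of M_red. -/
open Multiset

namespace LF

variable (M : Type*) [CancelCommMonoid M]

/-- `s` is a factorization of the element `b` of the reduced monoid `M_red = Associates M`:
a multiset of atoms of `M_red` whose product is `b`. -/
def IsFactorizationOf (s : Multiset (Associates M)) (b : Associates M) : Prop :=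
  (∀ a ∈ s, Irreducible a) ∧ s.prod = b

/-- The set of factorizations of `x : M`. -/
def FactorsOf (x : M) : Set (Multiset (Associates M)) :=
  {s | IsFactorizationOf M s (Associates.mk x)}

/-- `M` is atomic: every non-unit admits a factorization into atoms. -/
def Atomic : Prop := ∀ x : M, ¬ IsUnit x → (FactorsOf M x).Nonempty

/-- `M` is length-factorial: factorizations of the same element with equal length coincide. -/
def LengthFactorial : Prop :=
  ∀ x : M, ∀ s ∈ FactorsOf M x, ∀ t ∈ FactorsOf M x, card s = card t → s = t

/-- `M` is a factorial (unique factorization) monoid: every element has exactly one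
factorization. -/
def Factorial : Prop := ∀ x : M, ∃! s, s ∈ FactorsOf M x

/-- `(z₁, z₂)` is a factorization relation: two multisets of atoms with the same product. -/
def IsRel (z1 z2 : Multiset (Associates M)) : Prop :=
  (∀ a ∈ z1, Irreducible a) ∧ (∀ a ∈ z2, Irreducible a) ∧ z1.prod = z2.prod

/-- A factorization relation is irredundant if the two sides share no atom. -/
def Irredundant (z1 z2 : Multiset (Associates M)) : Prop := ∀ a, a ∈ z1 → a ∉ z2

/-- Prime element of the reduced monoid. -/
def IsPrimeElem (p : Associates M) : Prop :=
  ¬ IsUnit p ∧ ∀ a b : Associates M, p ∣ a * b → p ∣ a ∨ p ∣ b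

/-- A purely long atom: a non-prime atom which, whenever it appears in an irredundant
unbalanced factorization relation, appears in the longer side. -/
def PurelyLong (a : Associates M) : Prop :=
  Irreducible a ∧ ¬ IsPrimeElem M a ∧
    ∀ z1 z2, IsRel M z1 z2 → Irredundant M z1 z2 → card z1 ≠ card z2 →
      a ∈ z1 → card z2 < card z1

/-- A purely short atom: a non-prime atom which, whenever it appears in an irredundant
unbalanced factorization relation, appears in the shorter side. -/
def PurelyShort (a : Associates M) : Prop :=
  Irreducible a ∧ ¬ IsPrimeElem M a ∧
    ∀ z1 z2, IsRel M z1 z2 → Irredundant M z1 z2 → card z1 ≠ card z2 →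
      a ∈ z1 → card z1 < card z2

/-- A subset `S` of the reduced monoid `M_red` is integrally independent in the Grothendieck
group `gp(M_red)`.  Since `M_red` embeds in `gp(M_red)` (as `M` is cancellative), a `ℤ`-linear
relation `∑ cᵢ sᵢ = 0` in `gp(M_red)`, split into its positive part `p` and negative part `q`,
amounts to an equality `∏ sᵢ ^ pᵢ = ∏ sᵢ ^ qᵢ` in `M_red`. -/
def IntegrallyIndependent (S : Set (Associates M)) : Prop :=
  ∀ (n : ℕ) (g : Fin n → Associates M), Function.Injective g → (∀ i, g i ∈ S) →
    ∀ p q : Fin n → ℕ, (∏ i, g i ^ p i) = (∏ i, g i ^ q i) → p = q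

/-- The set `{a - b : b ∈ S}` (written in the group `gp(M_red)`) is integrally independent:
a relation `∑ cᵢ (bᵢ - a) = 0` in `gp(M_red)`, with `c = p - q`, amounts to the equality
`a ^ (∑ qᵢ) * ∏ bᵢ ^ pᵢ = a ^ (∑ pᵢ) * ∏ bᵢ ^ qᵢ` in `M_red`. -/
def ShiftIntegrallyIndependent (a : Associates M) (S : Set (Associates M)) : Prop :=
  ∀ (n : ℕ) (g : Fin n → Associates M), Function.Injective g → (∀ i, g i ∈ S) →
    ∀ p q : Fin n → ℕ,
      a ^ (∑ i, q i) * ∏ i, g i ^ p i = a ^ (∑ i, p i) * ∏ i, g i ^ q i → p = q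

/-! If `M` is length-factorial but not factorial, cancelling the common atoms of two distinct
factorizations of an element gives an unbalanced relation `z₁ = z₂` between atoms with disjoint
sides; let `a` be an atom of the shorter side. Every relation `s = t` between atoms other than `a`
is then balanced, since otherwise a suitable combination of the two relations would be balanced
but contain `a` on one side only; so it is trivial, which is the independence of
`A(M_red) \ {a}`. A relation among the `a - b` is, after padding both sides with powers of `a`,
a balanced relation between atoms, so it is trivial as well. Conversely, removing the copies of
`a` from two factorizations of the same length leaves a relation among the `a - b`. -/

section Exponents

variable {α : Type*}

def ofExponents {n : ℕ} (g : Fin n → α) (p : Fin n → ℕ) : Multiset α :=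
  ∑ i, replicate (p i) (g i)

variable {n : ℕ} {g : Fin n → α}

lemma prod_ofExponents [CommMonoid α] (p : Fin n → ℕ) :
    (ofExponents g p).prod = ∏ i, g i ^ p i := by
  simp only [ofExponents, prod_sum, prod_replicate]

lemma card_ofExponents (p : Fin n → ℕ) :
    card (ofExponents g p) = ∑ i, p i := by
  simp only [ofExponents, card_sum, card_replicate]

lemma mem_range_of_mem_ofExponents {p : Fin n → ℕ} {x : α} (hx : x ∈ ofExponents g p) :
    x ∈ Set.range g := by
  obtain ⟨i, -, hi⟩ := mem_sum.1 hx
  exact ⟨i, (eq_of_mem_replicate hi).symm⟩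

lemma count_ofExponents [DecidableEq α] (hg : Function.Injective g) (p : Fin n → ℕ)
    (j : Fin n) : count (g j) (ofExponents g p) = p j := by
  rw [ofExponents, count_sum', Finset.sum_eq_single j (fun i _ hij => ?_) (by simp)]
  · simp
  · exact count_eq_zero_of_notMem fun h => hij (hg (eq_of_mem_replicate h).symm)

lemma ofExponents_count [DecidableEq α] (hg : Function.Injective g) {s : Multiset α}
    (hs : ∀ x ∈ s, x ∈ Set.range g) : ofExponents g (fun i => count (g i) s) = s := by
  ext x
  by_cases hx : x ∈ Set.range g
  · obtain ⟨j, rfl⟩ := hx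
    exact count_ofExponents hg _ j
  · rw [count_eq_zero_of_notMem (fun h => hx (mem_range_of_mem_ofExponents h)),
      count_eq_zero_of_notMem (fun h => hx (hs x h))]

lemma forall_ofExponents_iff (S : Set α) (P : Multiset α → Multiset α → Prop) :
    (∀ (n : ℕ) (g : Fin n → α), Function.Injective g → (∀ i, g i ∈ S) →
      ∀ p q : Fin n → ℕ, P (ofExponents g p) (ofExponents g q) → p = q) ↔
    ∀ s t : Multiset α, (∀ x ∈ s, x ∈ S) → (∀ x ∈ t, x ∈ S) → P s t → s = t := by
  classical
  constructor
  · intro h s t hs ht hst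
    set F := (s + t).toFinset
    let g : Fin F.card → α := fun i => F.equivFin.symm i
    have hg : Function.Injective g := fun i j hij => F.equivFin.symm.injective (Subtype.ext hij)
    have hrange : ∀ x ∈ s + t, x ∈ Set.range g := fun x hx =>
      ⟨F.equivFin ⟨x, mem_toFinset.2 hx⟩, by simp [g]⟩
    have hgS : ∀ i, g i ∈ S := fun i => by
      rcases mem_add.1 (mem_toFinset.1 (F.equivFin.symm i).2) with h | h
      exacts [hs _ h, ht _ h]
    have hs' := ofExponents_count hg fun x hx => hrange x (mem_add.2 (Or.inl hx))
    have ht' := ofExponents_count hg fun x hx => hrange x (mem_add.2 (Or.inr hx))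
    rw [← hs', ← ht'] at hst ⊢
    rw [h _ g hg hgS _ _ hst]
  · intro h n g hg hgS p q hpq
    have hmem : ∀ r : Fin n → ℕ, ∀ x ∈ ofExponents g r, x ∈ S := fun r x hx => by
      obtain ⟨i, rfl⟩ := mem_range_of_mem_ofExponents hx
      exact hgS i
    have hpq := h _ _ (hmem p) (hmem q) hpq
    funext j
    rw [← count_ofExponents hg p j, ← count_ofExponents hg q j, hpq]

end Exponents

section ReducedMonoid

variable {M}

instance : IsLeftCancelMul (Associates M) where
  mul_left_cancel := by
    rintro ⟨a⟩ ⟨b⟩ ⟨c⟩ h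
    obtain ⟨u, hu⟩ := Associates.mk_eq_mk_iff_associated.1 h
    refine Associates.mk_eq_mk_iff_associated.2 ⟨u, mul_left_cancel (a := a) ?_⟩
    rw [← mul_assoc]
    exact hu

lemma integrallyIndependent_iff {S : Set (Associates M)} :
    IntegrallyIndependent M S ↔ ∀ s t : Multiset (Associates M),
      (∀ x ∈ s, x ∈ S) → (∀ x ∈ t, x ∈ S) → s.prod = t.prod → s = t := by
  unfold IntegrallyIndependent
  simpa only [prod_ofExponents] using forall_ofExponents_iff S fun s t => s.prod = t.prod

lemma shiftIntegrallyIndependent_iff {a : Associates M} {S : Set (Associates M)} :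
    ShiftIntegrallyIndependent M a S ↔ ∀ s t : Multiset (Associates M),
      (∀ x ∈ s, x ∈ S) → (∀ x ∈ t, x ∈ S) →
        a ^ card t * s.prod = a ^ card s * t.prod → s = t := by
  unfold ShiftIntegrallyIndependent
  simpa only [prod_ofExponents, card_ofExponents] using
    forall_ofExponents_iff S fun s t => a ^ card t * s.prod = a ^ card s * t.prod

lemma IsRel.symm {z₁ z₂ : Multiset (Associates M)} (h : IsRel M z₁ z₂) : IsRel M z₂ z₁ :=
  ⟨h.2.1, h.1, h.2.2.symm⟩

lemma IsRel.add {z₁ z₂ w₁ w₂ : Multiset (Associates M)} (hz : IsRel M z₁ z₂)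
    (hw : IsRel M w₁ w₂) : IsRel M (z₁ + w₁) (z₂ + w₂) := by
  refine ⟨?_, ?_, by rw [prod_add, prod_add, hz.2.2, hw.2.2]⟩
  · simpa only [mem_add, or_imp, forall_and] using ⟨hz.1, hw.1⟩
  · simpa only [mem_add, or_imp, forall_and] using ⟨hz.2.1, hw.2.1⟩

lemma IsRel.nsmul {z₁ z₂ : Multiset (Associates M)} (h : IsRel M z₁ z₂) (k : ℕ) :
    IsRel M (k • z₁) (k • z₂) := by
  refine ⟨fun x hx => h.1 x (mem_of_mem_nsmul hx), fun x hx => h.2.1 x (mem_of_mem_nsmul hx), ?_⟩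
  rw [prod_nsmul, prod_nsmul, h.2.2]

lemma LengthFactorial.eq_of_isRel (hlf : LengthFactorial M) {s t : Multiset (Associates M)}
    (h : IsRel M s t) (hc : card s = card t) : s = t := by
  obtain ⟨x, hx⟩ := Associates.mk_surjective s.prod
  exact hlf x s ⟨h.1, hx.symm⟩ t ⟨h.2.1, hx ▸ h.2.2.symm⟩ hc

lemma LengthFactorial.card_le_of_isRel (hlf : LengthFactorial M) {a : Associates M}
    {z₁ z₂ s t : Multiset (Associates M)} (hz : IsRel M z₁ z₂) (hlt : card z₁ < card z₂)
    (ha₁ : a ∈ z₁) (ha₂ : a ∉ z₂) (hst : IsRel M s t) (hs : a ∉ s) (ht : a ∉ t) :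
    card t ≤ card s := by
  classical
  by_contra! hts
  set k := card t - card s
  set l := card z₂ - card z₁
  have heq : k • z₁ + l • t = k • z₂ + l • s := by
    refine hlf.eq_of_isRel ((hz.nsmul k).add (hst.symm.nsmul l)) ?_
    simp only [card_add, card_nsmul]
    have ht' : card t = card s + k := by omega
    have hz' : card z₂ = card z₁ + l := by omega
    rw [ht', hz']
    ring
  have hcount := congrArg (count a) heq
  simp only [count_add, count_nsmul, count_eq_zero_of_notMem ha₂, count_eq_zero_of_notMem hs,
    count_eq_zero_of_notMem ht, mul_zero, add_zero, mul_eq_zero] at hcount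
  rcases hcount with hk | hc
  · omega
  · exact (count_pos.2 ha₁).ne' hc

lemma LengthFactorial.integrallyIndependent (hlf : LengthFactorial M) {a : Associates M}
    {z₁ z₂ : Multiset (Associates M)} (hz : IsRel M z₁ z₂) (hlt : card z₁ < card z₂)
    (ha₁ : a ∈ z₁) (ha₂ : a ∉ z₂) :
    IntegrallyIndependent M ({b | Irreducible b} \ {a}) := by
  rw [integrallyIndependent_iff]
  intro s t hs ht hst
  have hrel : IsRel M s t := ⟨fun x hx => (hs x hx).1, fun x hx => (ht x hx).1, hst⟩
  have hsa : a ∉ s := fun h => (hs a h).2 rfl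
  have hta : a ∉ t := fun h => (ht a h).2 rfl
  exact hlf.eq_of_isRel hrel (le_antisymm
    (hlf.card_le_of_isRel hz hlt ha₁ ha₂ hrel.symm hta hsa)
    (hlf.card_le_of_isRel hz hlt ha₁ ha₂ hrel hsa hta))

lemma LengthFactorial.shiftIntegrallyIndependent (hlf : LengthFactorial M) {a : Associates M}
    (ha : Irreducible a) : ShiftIntegrallyIndependent M a ({b | Irreducible b} \ {a}) := by
  classical
  rw [shiftIntegrallyIndependent_iff]
  intro s t hs ht hst
  have hrel : IsRel M (replicate (card t) a + s) (replicate (card s) a + t) := by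
    refine ⟨?_, ?_, by rwa [prod_add, prod_add, prod_replicate, prod_replicate]⟩
    · simpa only [mem_add, mem_replicate, or_imp, forall_and] using
        ⟨fun x hx => hx.2 ▸ ha, fun x hx => (hs x hx).1⟩
    · simpa only [mem_add, mem_replicate, or_imp, forall_and] using
        ⟨fun x hx => hx.2 ▸ ha, fun x hx => (ht x hx).1⟩
  have heq := hlf.eq_of_isRel hrel (by simp only [card_add, card_replicate, add_comm])
  have hcard : card t = card s := by
    simpa [count_eq_zero_of_notMem fun h => (hs a h).2 rfl,
      count_eq_zero_of_notMem fun h => (ht a h).2 rfl] using congrArg (count a) heq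
  rw [hcard] at heq
  exact add_left_cancel heq

lemma exists_irredundant_isRel (hat : Atomic M) (hnf : ¬ Factorial M) :
    ∃ z₁ z₂, IsRel M z₁ z₂ ∧ Irredundant M z₁ z₂ ∧ z₁ ≠ z₂ := by
  classical
  obtain ⟨x, hx⟩ := not_forall.1 hnf
  obtain ⟨s, hs⟩ : (FactorsOf M x).Nonempty := by
    by_cases hu : IsUnit x
    · exact ⟨0, fun y hy => absurd hy (notMem_zero y), (Associates.mk_eq_one.2 hu).symm⟩
    · exact hat x hu
  obtain ⟨t, ht, hts⟩ : ∃ t ∈ FactorsOf M x, t ≠ s := by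
    by_contra! h
    exact hx ⟨s, hs, h⟩
  refine ⟨s - t, t - s, ⟨fun y hy => hs.1 y (mem_of_le (Multiset.sub_le_self _ _) hy),
    fun y hy => ht.1 y (mem_of_le (Multiset.sub_le_self _ _) hy), ?_⟩, fun y hy₁ hy₂ => ?_, ?_⟩
  · refine mul_left_cancel (a := (s ∩ t).prod) ?_
    rw [← prod_add, ← prod_add, add_comm, sub_add_inter, inter_comm, add_comm, sub_add_inter,
      hs.2, ht.2]
  · rw [← count_pos, count_sub] at hy₁ hy₂
    omega
  · intro h
    apply hts
    rw [← sub_add_inter t s, ← h, inter_comm, sub_add_inter]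

lemma LengthFactorial.exists_isRel_card_lt (hlf : LengthFactorial M) (hat : Atomic M)
    (hnf : ¬ Factorial M) :
    ∃ z₁ z₂ a, IsRel M z₁ z₂ ∧ card z₁ < card z₂ ∧ a ∈ z₁ ∧ a ∉ z₂ := by
  obtain ⟨z₁, z₂, hz, hirr, hne⟩ := exists_irredundant_isRel hat hnf
  wlog hlt : card z₁ < card z₂ generalizing z₁ z₂
  · refine this z₂ z₁ hz.symm (fun a ha₂ ha₁ => hirr a ha₁ ha₂) hne.symm ?_
    exact lt_of_le_of_ne (not_lt.1 hlt) fun hc => hne (hlf.eq_of_isRel hz hc.symm)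
  obtain ⟨a, ha⟩ : ∃ a, a ∈ z₁ := by
    refine exists_mem_of_ne_zero fun h₁ => ?_
    obtain ⟨b, hb⟩ := exists_mem_of_ne_zero (card_pos.1 (h₁ ▸ hlt))
    refine (hz.2.1 b hb).not_isUnit (isUnit_of_dvd_one ?_)
    rw [← prod_zero, ← h₁, hz.2.2]
    exact dvd_prod hb
  exact ⟨z₁, z₂, a, hz, hlt, ha, hirr a ha⟩

lemma lengthFactorial_of_shiftIntegrallyIndependent {a : Associates M}
    (h : ShiftIntegrallyIndependent M a ({b | Irreducible b} \ {a})) : LengthFactorial M := by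
  classical
  rintro x s ⟨hsi, hsx⟩ t ⟨hti, htx⟩ hc
  have hsplit (r : Multiset (Associates M)) : replicate (count a r) a + r.filter (· ≠ a) = r := by
    rw [← filter_eq', filter_add_not]
  set s' := s.filter (· ≠ a)
  set t' := t.filter (· ≠ a)
  have hcard : count a s + card s' = count a t + card t' := by
    rw [← card_replicate (count a s) a, ← card_replicate (count a t) a, ← card_add, ← card_add,
      hsplit, hsplit, hc]
  have hprod (r : Multiset (Associates M)) : r.prod = a ^ count a r * (r.filter (· ≠ a)).prod := by
    rw [← prod_replicate, ← prod_add, hsplit]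
  have hmem (r : Multiset (Associates M)) (hr : ∀ y ∈ r, Irreducible y) :
      ∀ y ∈ r.filter (· ≠ a), y ∈ ({b | Irreducible b} \ {a} : Set (Associates M)) :=
    fun y hy => ⟨hr y (mem_of_mem_filter hy), (of_mem_filter hy :)⟩
  have hst' : s' = t' := by
    refine (shiftIntegrallyIndependent_iff.1 h) s' t' (hmem s hsi) (hmem t hti) ?_
    refine mul_left_cancel (a := a ^ count a s) ?_
    calc a ^ count a s * (a ^ card t' * s'.prod) = a ^ card t' * s.prod := by
          rw [hprod s, mul_left_comm]
      _ = a ^ card t' * t.prod := by rw [hsx, htx]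
      _ = a ^ count a s * (a ^ card s' * t'.prod) := by
          rw [hprod t, ← mul_assoc, ← mul_assoc, ← pow_add, ← pow_add, add_comm (card t'),
            ← hcard]
  calc s = replicate (count a s) a + s' := (hsplit s).symm
    _ = replicate (count a t) a + t' := by
      rw [hst', show count a s = count a t by rw [hst'] at hcard; omega]
    _ = t := hsplit t

end ReducedMonoid

/-- An atomic monoid `M` that is not factorial is length-factorial if and
only if there is an atom `a` of `M_red` such that both `A(M_red) \ {a}` and
`a - (A(M_red) \ {a})` are integrally independent in `gp(M_red)`. -/
theorem stmt2 (hat : Atomic M) (hnf : ¬ Factorial M) :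
    LengthFactorial M ↔
      ∃ a : Associates M, Irreducible a ∧
        IntegrallyIndependent M ({b | Irreducible b} \ {a}) ∧
        ShiftIntegrallyIndependent M a ({b | Irreducible b} \ {a}) := by
  refine ⟨fun hlf => ?_, fun ⟨a, _, _, h⟩ => lengthFactorial_of_shiftIntegrallyIndependent h⟩
  obtain ⟨z₁, z₂, a, hz, hlt, ha₁, ha₂⟩ := hlf.exists_isRel_card_lt hat hnf
  have ha : Irreducible a := hz.1 a ha₁
  exact ⟨a, ha, hlf.integrallyIndependent hz hlt ha₁ ha₂, hlf.shiftIntegrallyIndependent ha⟩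

end LF
end

section
/- An atomic monoid M is length-factorial if and only if its equal catenary degree c_eq(M) equals 0. -/
open Multiset

namespace LF

variable (M : Type*) [CancelCommMonoid M]

/-- The distance between two factorizations: `d(z, z') = max(|z / gcd(z,z')|, |z' / gcd(z,z')|)`,
computed with multiset difference. -/
noncomputable def mdist (s t : Multiset (Associates M)) : ℕ :=
  letI := Classical.decEq (Associates M)
  max (card (s - t)) (card (t - s))

/-- `L` is an `N`-chain of factorizations of `x` from `z` to `z'`. -/
def IsNChainFrom (x : M) (N : ℕ∞) (L : List (Multiset (Associates M)))
    (z z' : Multiset (Associates M)) : Prop :=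
  L.head? = some z ∧ L.getLast? = some z' ∧ (∀ w ∈ L, w ∈ FactorsOf M x) ∧
    L.Chain' (fun u v => (mdist M u v : ℕ∞) ≤ N)

/-- The lengths along the chain `L` are monotone (nondecreasing or nonincreasing). -/
def MonotoneLengths (L : List (Multiset (Associates M))) : Prop :=
  (L.map card).Chain' (· ≤ ·) ∨ (L.map card).Chain' (fun a b => b ≤ a)

/-- The equal catenary degree `c_eq(M)`. -/
noncomputable def cEq : ℕ∞ :=
  ⨆ x : M, sInf {N : ℕ∞ | ∀ z ∈ FactorsOf M x, ∀ z' ∈ FactorsOf M x, card z = card z' →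
    ∃ L, IsNChainFrom M x N L z z' ∧ MonotoneLengths M L}

theorem _root_.List.IsChain.eq_of_head?_of_getLast? {α : Type*} {L : List α} {z z' : α}
    (h : L.IsChain (· = ·)) (hz : L.head? = some z) (hz' : L.getLast? = some z') : z = z' := by
  rw [List.isChain_eq_iff_eq_replicate.mp h z hz, List.getLast?_replicate] at hz'
  simp_all

variable {M}

theorem mdist_eq_zero_iff {s t : Multiset (Associates M)} : mdist M s t = 0 ↔ s = t := by
  simp only [mdist, Nat.max_eq_zero_iff, card_eq_zero, tsub_eq_zero_iff_le]
  exact le_antisymm_iff.symm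

theorem IsNChainFrom.eq_of_zero {x : M} {L : List (Multiset (Associates M))}
    {z z' : Multiset (Associates M)} (h : IsNChainFrom M x 0 L z z') : z = z' := by
  obtain ⟨hz, hz', -, hchain⟩ := h
  refine List.IsChain.eq_of_head?_of_getLast? (hchain.imp fun u v huv => ?_) hz hz'
  exact mdist_eq_zero_iff.mp (by exact_mod_cast nonpos_iff_eq_zero.mp huv)

theorem isNChainFrom_singleton {x : M} {z : Multiset (Associates M)} (hz : z ∈ FactorsOf M x)
    (N : ℕ∞) : IsNChainFrom M x N [z] z z :=
  ⟨rfl, rfl, by simpa using hz, List.isChain_singleton _⟩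

theorem monotoneLengths_singleton (z : Multiset (Associates M)) : MonotoneLengths M [z] :=
  Or.inl (List.isChain_singleton _)

variable (M) in
/-- `c_eq(x)` is the infimum of the `N` satisfying this. -/
def IsEqCatenaryBound (x : M) (N : ℕ∞) : Prop :=
  ∀ z ∈ FactorsOf M x, ∀ z' ∈ FactorsOf M x, card z = card z' →
    ∃ L, IsNChainFrom M x N L z z' ∧ MonotoneLengths M L

theorem isEqCatenaryBound_zero_iff {x : M} :
    IsEqCatenaryBound M x 0 ↔
      ∀ z ∈ FactorsOf M x, ∀ z' ∈ FactorsOf M x, card z = card z' → z = z' := by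
  refine forall₅_congr fun z hz z' _ _ => ⟨fun ⟨_, hL, _⟩ => hL.eq_of_zero, ?_⟩
  rintro rfl
  exact ⟨[z], isNChainFrom_singleton hz 0, monotoneLengths_singleton z⟩

theorem stmt5_general : LengthFactorial M ↔ cEq M = 0 := by
  change _ ↔ ⨆ x : M, sInf {N | IsEqCatenaryBound M x N} = 0
  rw [ENat.iSup_eq_zero]
  exact forall_congr' fun x => (ENat.sInf_eq_zero.trans isEqCatenaryBound_zero_iff).symm

/-- An atomic monoid is length-factorial if and only if its equal catenary
degree is `0`. -/
theorem stmt5 (hat : Atomic M) : LengthFactorial M ↔ cEq M = 0 :=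
  stmt5_general

end LF
end

section
/- If M is a proper length-factorial monoid with master factorization relation (w1,w2), then the catenary degree, the monotone catenary degree, and the adjacent catenary degree of M all equal max(|w1|, |w2|). -/
open Multiset

namespace LF

variable (M : Type*) [CancelCommMonoid M]

/-- `(w₁, w₂)` is a master factorization relation: an irredundant unbalanced factorization
relation such that every irredundant unbalanced factorization relation is of the form
`(n • w₁, n • w₂)` or `(n • w₂, n • w₁)` for some positive integer `n`. -/
def IsMasterRel (w1 w2 : Multiset (Associates M)) : Prop :=
  IsRel M w1 w2 ∧ Irredundant M w1 w2 ∧ card w1 ≠ card w2 ∧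
    ∀ z1 z2, IsRel M z1 z2 → Irredundant M z1 z2 → card z1 ≠ card z2 →
      ∃ n : ℕ, 0 < n ∧ ((z1 = n • w1 ∧ z2 = n • w2) ∨ (z1 = n • w2 ∧ z2 = n • w1))
/-- The catenary degree `c(M)`. -/
noncomputable def cCat : ℕ∞ :=
  ⨆ x : M, sInf {N : ℕ∞ | ∀ z ∈ FactorsOf M x, ∀ z' ∈ FactorsOf M x,
    ∃ L, IsNChainFrom M x N L z z'}

/-- The monotone catenary degree `c_mon(M)`. -/
noncomputable def cMon : ℕ∞ :=
  ⨆ x : M, sInf {N : ℕ∞ | ∀ z ∈ FactorsOf M x, ∀ z' ∈ FactorsOf M x,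
    ∃ L, IsNChainFrom M x N L z z' ∧ MonotoneLengths M L}

/-- The set of lengths `L(x)`. -/
def lengthsOf (x : M) : Set ℕ := {n | ∃ z ∈ FactorsOf M x, card z = n}

/-- The distance between two sets of factorizations. -/
noncomputable def setDist (Z1 Z2 : Set (Multiset (Associates M))) : ℕ∞ :=
  ⨅ z1 ∈ Z1, ⨅ z2 ∈ Z2, (mdist M z1 z2 : ℕ∞)

/-- The adjacent catenary degree `c_adj(M)`. -/
noncomputable def cAdj : ℕ∞ :=
  ⨆ x : M, sSup {d : ℕ∞ | ∃ k ℓ : ℕ, k ∈ lengthsOf M x ∧ ℓ ∈ lengthsOf M x ∧ k < ℓ ∧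
    (∀ j, k < j → j < ℓ → j ∉ lengthsOf M x) ∧
    d = setDist M {z ∈ FactorsOf M x | card z = k} {z ∈ FactorsOf M x | card z = ℓ}}

/-!
Two distinct factorizations `z, z'` of one element differ by the irredundant relation
`(z - z', z' - z)`, which is unbalanced by length-factoriality and hence equals `n • (w₁, w₂)`
up to order. Trading one copy of `w₁` for one copy of `w₂` at a time walks from `z` to `z'`
through factorizations with monotone lengths, in steps of distance `max(|w₁|, |w₂|)`; this
bounds all three degrees from above, and when the lengths of `z, z'` are adjacent it forces
`n = 1`. Conversely the element `w₁.prod` has exactly the two factorizations `w₁` and `w₂`,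
whose lengths are adjacent and whose distance is `max(|w₁|, |w₂|)`.
-/

theorem exists_ne_rel_of_isChain {α : Type*} {R : α → α → Prop} :
    ∀ {L : List α} {a b : α}, L.IsChain R → L.head? = some a → L.getLast? = some b →
      a ≠ b → ∃ u ∈ L, ∃ v ∈ L, u ≠ v ∧ R u v
  | [], _, _, _, ha, _, _ => by simp at ha
  | [_], _, _, _, ha, hb, hne => by simp_all
  | x :: y :: L, a, b, hL, ha, hb, hne => by
    obtain rfl : x = a := by simpa using ha
    by_cases hxy : x = y
    · subst hxy
      obtain ⟨u, hu, v, hv, huv, hR⟩ :=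
        exists_ne_rel_of_isChain hL.tail rfl (by rwa [List.getLast?_cons_cons] at hb) hne
      exact ⟨u, List.mem_cons_of_mem _ hu, v, List.mem_cons_of_mem _ hv, huv, hR⟩
    · exact ⟨x, by simp, y, by simp, hxy, (List.isChain_cons_cons.mp hL).1⟩

section ExchangePath

variable {α : Type*}

def exchangePath (g A B : Multiset α) (n k : ℕ) : Multiset α := g + (n - k) • A + k • B

variable {g A B : Multiset α} {n k : ℕ}

@[simp]
theorem exchangePath_zero : exchangePath g A B n 0 = g + n • A := by
  simp [exchangePath]

@[simp]
theorem exchangePath_self : exchangePath g A B n n = g + n • B := by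
  simp [exchangePath]

theorem exchangePath_of_lt (hk : k < n) :
    exchangePath g A B n k = exchangePath g A B (n - 1) k + A := by
  rw [exchangePath, exchangePath, show n - k = n - 1 - k + 1 by omega, succ_nsmul]
  abel

theorem exchangePath_succ : exchangePath g A B n (k + 1) = exchangePath g A B (n - 1) k + B := by
  rw [exchangePath, exchangePath, show n - (k + 1) = n - 1 - k by omega, succ_nsmul]
  abel

theorem card_exchangePath (hk : k ≤ n) :
    (card (exchangePath g A B n k) : ℤ) =
      card g + n * card A + k * ((card B : ℤ) - card A) := by
  simp only [exchangePath, card_add, card_nsmul]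
  push_cast [Nat.cast_sub hk]
  ring

end ExchangePath

section Factorizations

variable {M}

instance inst_s6 : IsLeftCancelMul (Associates M) where
  mul_left_cancel a b c h := by
    obtain ⟨a, rfl⟩ := Associates.mk_surjective a
    obtain ⟨b, rfl⟩ := Associates.mk_surjective b
    obtain ⟨c, rfl⟩ := Associates.mk_surjective c
    simp only [Associates.mk_mul_mk, Associates.mk_eq_mk_iff_associated] at h ⊢
    obtain ⟨u, hu⟩ := h
    exact ⟨u, mul_left_cancel (a := a) (by rw [← mul_assoc, hu])⟩

theorem eq_zero_of_prod_eq_one {s : Multiset (Associates M)} (hs : ∀ a ∈ s, Irreducible a)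
    (h : s.prod = 1) : s = 0 := by
  by_contra hne
  obtain ⟨a, ha⟩ := exists_mem_of_ne_zero hne
  exact (hs a ha).not_isUnit (isUnit_of_dvd_one (h ▸ dvd_prod ha))

variable {x : M} {z z' g A B w1 w2 : Multiset (Associates M)} {n : ℕ}

theorem Irredundant.symm (h : Irredundant M A B) : Irredundant M B A :=
  fun a hb ha => h a ha hb

theorem irredundant_sub_sub [DecidableEq (Associates M)] (z z' : Multiset (Associates M)) :
    Irredundant M (z - z') (z' - z) := by
  intro a ha ha'
  rw [← count_pos, count_sub] at ha ha'
  omega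

theorem isRel_sub_sub [DecidableEq (Associates M)] (hz : z ∈ FactorsOf M x)
    (hz' : z' ∈ FactorsOf M x) : IsRel M (z - z') (z' - z) := by
  refine ⟨fun a ha => hz.1 a (mem_of_le tsub_le_self ha),
    fun a ha => hz'.1 a (mem_of_le tsub_le_self ha), mul_left_cancel (a := (z ∩ z').prod) ?_⟩
  rw [← prod_add, ← prod_add, add_comm, sub_add_inter, add_comm, inter_comm, sub_add_inter,
    hz.2, hz'.2]

theorem add_mem_factorsOf (h : g + A ∈ FactorsOf M x) (hAB : IsRel M A B) :
    g + B ∈ FactorsOf M x := by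
  refine ⟨fun a ha => ?_, ?_⟩
  · rcases mem_add.mp ha with ha | ha
    exacts [h.1 a (mem_add.mpr (Or.inl ha)), hAB.2.1 a ha]
  · rw [← h.2, prod_add, prod_add, hAB.2.2]

theorem exchangePath_mem_factorsOf (hAB : IsRel M A B) (hz : g + n • A ∈ FactorsOf M x) :
    ∀ k ≤ n, exchangePath g A B n k ∈ FactorsOf M x
  | 0, _ => by simpa using hz
  | k + 1, hk => by
    have hprev := exchangePath_mem_factorsOf hAB hz k (by omega)
    rw [exchangePath_of_lt hk] at hprev
    rw [exchangePath_succ]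
    exact add_mem_factorsOf hprev hAB

theorem sub_eq_self_of_irredundant [DecidableEq (Associates M)] (h : Irredundant M A B) :
    A - B = A := by
  ext a
  by_cases ha : a ∈ A
  · rw [count_sub, count_eq_zero_of_notMem (h a ha), Nat.sub_zero]
  · rw [count_sub, count_eq_zero_of_notMem ha, Nat.zero_sub]

theorem mdist_add_add (h : Irredundant M A B) :
    mdist M (g + A) (g + B) = max (card A) (card B) := by
  let := Classical.decEq (Associates M) -- the instance `mdist` is defined with
  simp only [mdist, add_tsub_add_eq_tsub_left, sub_eq_self_of_irredundant h,
    sub_eq_self_of_irredundant h.symm]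

theorem Irredundant.nsmul (h : Irredundant M A B) (n : ℕ) : Irredundant M (n • A) (n • B) :=
  fun a ha hb => h a (mem_of_mem_nsmul ha) (mem_of_mem_nsmul hb)

theorem mdist_add_nsmul (h : Irredundant M A B) :
    mdist M (g + n • A) (g + n • B) = n * max (card A) (card B) := by
  rw [mdist_add_add (h.nsmul n), card_nsmul, card_nsmul, Nat.mul_max_mul_left]

theorem exists_monotone_chain_exchangePath (hAB : IsRel M A B) (hirr : Irredundant M A B)
    (hz : g + n • A ∈ FactorsOf M x) :
    ∃ L, IsNChainFrom M x (max (card A) (card B) : ℕ) L (g + n • A) (g + n • B) ∧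
      MonotoneLengths M L := by
  refine ⟨(List.range (n + 1)).map (exchangePath g A B n),
    ⟨by simp [List.head?_range], by simp [List.getLast?_range], ?_, ?_⟩, ?_⟩
  · simp only [List.mem_map, List.mem_range]
    rintro _ ⟨k, hk, rfl⟩
    exact exchangePath_mem_factorsOf hAB hz k (by omega)
  · change List.IsChain _ _
    rw [List.isChain_map, List.isChain_range_succ]
    intro m hm
    rw [exchangePath_of_lt hm, exchangePath_succ, mdist_add_add hirr]
  · change List.IsChain _ _ ∨ List.IsChain _ _
    simp only [List.map_map, List.isChain_map, List.isChain_range_succ, Function.comp_apply]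
    rcases le_total (card A) (card B) with h | h
    · exact Or.inl fun m hm => by simp [exchangePath_of_lt hm, exchangePath_succ, h]
    · exact Or.inr fun m hm => by simp [exchangePath_of_lt hm, exchangePath_succ, h]

theorem mdist_add_nsmul_of_adjacent_lengths (hAB : IsRel M A B) (hirr : Irredundant M A B)
    (hn : 0 < n) (hz : g + n • A ∈ FactorsOf M x) (hlt : card (g + n • A) < card (g + n • B))
    (hadj : ∀ j, card (g + n • A) < j → j < card (g + n • B) → j ∉ lengthsOf M x) :
    mdist M (g + n • A) (g + n • B) = max (card A) (card B) := by
  obtain rfl : n = 1 := by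
    by_contra hn1
    have h0 := card_exchangePath (g := g) (A := A) (B := B) (Nat.zero_le n)
    have h1 := card_exchangePath (g := g) (A := A) (B := B) (n := n) (k := 1) (by omega)
    have hn' := card_exchangePath (g := g) (A := A) (B := B) (le_refl n)
    simp only [exchangePath_zero, exchangePath_self, Nat.cast_zero, Nat.cast_one, zero_mul,
      one_mul, add_zero] at h0 h1 hn'
    zify at hlt
    have hd : 0 < (card B : ℤ) - card A :=
      pos_of_mul_pos_right (a := (n : ℤ)) (by linarith) (by positivity)
    have hstep := mul_lt_mul_of_pos_right (show (1 : ℤ) < n by norm_cast; omega) hd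
    refine hadj _ ?_ ?_ ⟨_, exchangePath_mem_factorsOf hAB hz 1 (by omega), rfl⟩
    all_goals zify; linarith
  rw [one_nsmul, one_nsmul, mdist_add_add hirr]

theorem IsMasterRel.symm (hw : IsMasterRel M w1 w2) : IsMasterRel M w2 w1 := by
  obtain ⟨⟨h1, h2, hprod⟩, hirr, hcard, hmaster⟩ := hw
  refine ⟨⟨h2, h1, hprod.symm⟩, hirr.symm, hcard.symm, fun z1 z2 hz hirr' hc => ?_⟩
  obtain ⟨n, hn, h⟩ := hmaster z1 z2 hz hirr' hc
  exact ⟨n, hn, h.symm⟩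

theorem IsMasterRel.right_ne_zero (hw : IsMasterRel M w1 w2) : w2 ≠ 0 := by
  rintro rfl
  exact hw.2.2.1 (by rw [eq_zero_of_prod_eq_one hw.1.1 (by simpa using hw.1.2.2)])

theorem IsMasterRel.exists_eq_add_nsmul (hlf : LengthFactorial M) (hw : IsMasterRel M w1 w2)
    (hz : z ∈ FactorsOf M x) (hz' : z' ∈ FactorsOf M x) (hne : z ≠ z') :
    ∃ n > 0, ∃ g, (z = g + n • w1 ∧ z' = g + n • w2) ∨ (z = g + n • w2 ∧ z' = g + n • w1) := by
  classical
  have hz_eq : z = z ∩ z' + (z - z') := by rw [add_comm, sub_add_inter]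
  have hz'_eq : z' = z ∩ z' + (z' - z) := by rw [add_comm, inter_comm, sub_add_inter]
  have hcard : card (z - z') ≠ card (z' - z) := fun h => hne <| hlf x z hz z' hz' <| by
    rw [congrArg card hz_eq, congrArg card hz'_eq, card_add, card_add, h]
  obtain ⟨n, hn, h⟩ := hw.2.2.2 _ _ (isRel_sub_sub hz hz') (irredundant_sub_sub z z') hcard
  refine ⟨n, hn, z ∩ z', ?_⟩
  rcases h with ⟨h1, h2⟩ | ⟨h1, h2⟩
  exacts [Or.inl ⟨h1 ▸ hz_eq, h2 ▸ hz'_eq⟩, Or.inr ⟨h1 ▸ hz_eq, h2 ▸ hz'_eq⟩]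

theorem IsMasterRel.factorsOf_eq_pair (hlf : LengthFactorial M) (hw : IsMasterRel M w1 w2)
    (hx : Associates.mk x = w1.prod) : FactorsOf M x = {w1, w2} := by
  have hw1 : w1 ∈ FactorsOf M x := ⟨hw.1.1, hx.symm⟩
  have hw2 : w2 ∈ FactorsOf M x := ⟨hw.1.2.1, hw.1.2.2 ▸ hx.symm⟩
  refine Set.Subset.antisymm (fun z hz => ?_)
    (Set.insert_subset hw1 (Set.singleton_subset_iff.mpr hw2))
  by_contra hz12
  simp only [Set.mem_insert_iff, Set.mem_singleton_iff, not_or] at hz12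
  obtain ⟨n, hn, g, ⟨-, h⟩ | ⟨rfl, h⟩⟩ := hw.exists_eq_add_nsmul hlf hz hw1 hz12.1
  · obtain ⟨a, ha⟩ := exists_mem_of_ne_zero hw.right_ne_zero
    exact hw.2.1 a (h ▸ mem_add.mpr (Or.inr (mem_nsmul.mpr ⟨hn.ne', ha⟩))) ha
  · have hcard := congrArg card h
    rw [card_add, card_nsmul] at hcard
    have hpos := card_pos.mpr hw.symm.right_ne_zero
    have hle : card w1 ≤ n * card w1 := Nat.le_mul_of_pos_left _ hn
    have hg : g = 0 := card_eq_zero.mp (by omega)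
    have hn1 : n = 1 := Nat.eq_of_mul_eq_mul_right hpos (by omega)
    exact hz12.2 (by rw [hg, hn1, zero_add, one_nsmul])

theorem IsMasterRel.exists_monotone_chain (hlf : LengthFactorial M) (hw : IsMasterRel M w1 w2)
    (hz : z ∈ FactorsOf M x) (hz' : z' ∈ FactorsOf M x) :
    ∃ L, IsNChainFrom M x (max (card w1) (card w2) : ℕ) L z z' ∧ MonotoneLengths M L := by
  by_cases hne : z = z'
  · subst hne
    exact ⟨[z], ⟨rfl, rfl, by simpa using hz, List.isChain_singleton _⟩,
      Or.inl (List.isChain_singleton _)⟩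
  obtain ⟨n, -, g, ⟨rfl, rfl⟩ | ⟨rfl, rfl⟩⟩ := hw.exists_eq_add_nsmul hlf hz hz' hne
  · exact exists_monotone_chain_exchangePath hw.1 hw.2.1 hz
  · rw [max_comm]
    exact exists_monotone_chain_exchangePath hw.symm.1 hw.symm.2.1 hz

theorem IsMasterRel.le_mdist (hlf : LengthFactorial M) (hw : IsMasterRel M w1 w2)
    (hz : z ∈ FactorsOf M x) (hz' : z' ∈ FactorsOf M x) (hne : z ≠ z') :
    max (card w1) (card w2) ≤ mdist M z z' := by
  obtain ⟨n, hn, g, ⟨rfl, rfl⟩ | ⟨rfl, rfl⟩⟩ := hw.exists_eq_add_nsmul hlf hz hz' hne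
  · rw [mdist_add_nsmul hw.2.1]
    exact Nat.le_mul_of_pos_left _ hn
  · rw [mdist_add_nsmul hw.2.1.symm, max_comm]
    exact Nat.le_mul_of_pos_left _ hn

theorem IsMasterRel.le_of_isNChainFrom (hlf : LengthFactorial M) (hw : IsMasterRel M w1 w2)
    {N : ℕ∞} {L : List (Multiset (Associates M))} (hL : IsNChainFrom M x N L z z')
    (hne : z ≠ z') : ((max (card w1) (card w2) : ℕ) : ℕ∞) ≤ N := by
  obtain ⟨u, hu, v, hv, huv, huvN⟩ := exists_ne_rel_of_isChain hL.2.2.2 hL.1 hL.2.1 hne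
  exact (Nat.cast_le.mpr (hw.le_mdist hlf (hL.2.2.1 u hu) (hL.2.2.1 v hv) huv)).trans huvN

theorem IsMasterRel.mdist_eq_of_adjacent_lengths (hlf : LengthFactorial M)
    (hw : IsMasterRel M w1 w2) (hz : z ∈ FactorsOf M x) (hz' : z' ∈ FactorsOf M x)
    (hlt : card z < card z') (hadj : ∀ j, card z < j → j < card z' → j ∉ lengthsOf M x) :
    mdist M z z' = max (card w1) (card w2) := by
  obtain ⟨n, hn, g, ⟨rfl, rfl⟩ | ⟨rfl, rfl⟩⟩ :=
    hw.exists_eq_add_nsmul hlf hz hz' (by rintro rfl; omega)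
  · exact mdist_add_nsmul_of_adjacent_lengths hw.1 hw.2.1 hn hz hlt hadj
  · rw [max_comm]
    exact mdist_add_nsmul_of_adjacent_lengths hw.symm.1 hw.symm.2.1 hn hz hlt hadj

variable (M) in
theorem cCat_le_cMon : cCat M ≤ cMon M :=
  iSup_mono fun _ => sInf_le_sInf fun _ hN z hz z' hz' => (hN z hz z' hz').imp fun _ => And.left

theorem IsMasterRel.cMon_le (hlf : LengthFactorial M) (hw : IsMasterRel M w1 w2) :
    cMon M ≤ (max (card w1) (card w2) : ℕ) :=
  iSup_le fun _ => sInf_le fun _ hz _ hz' => hw.exists_monotone_chain hlf hz hz'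

theorem IsMasterRel.le_cCat (hlf : LengthFactorial M) (hw : IsMasterRel M w1 w2) :
    ((max (card w1) (card w2) : ℕ) : ℕ∞) ≤ cCat M := by
  obtain ⟨x, hx⟩ := Associates.mk_surjective w1.prod
  have hF := hw.factorsOf_eq_pair hlf hx
  refine le_iSup_of_le x (le_sInf fun N hN => ?_)
  obtain ⟨L, hL⟩ := hN w1 (by simp [hF]) w2 (by simp [hF])
  exact hw.le_of_isNChainFrom hlf hL fun h => hw.2.2.1 (h ▸ rfl)

theorem IsMasterRel.cAdj_le (hlf : LengthFactorial M) (hw : IsMasterRel M w1 w2) :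
    cAdj M ≤ (max (card w1) (card w2) : ℕ) := by
  refine iSup_le fun x => sSup_le ?_
  rintro _ ⟨k, l, ⟨z, hz, rfl⟩, ⟨z', hz', rfl⟩, hlt, hadj, rfl⟩
  refine iInf₂_le_of_le z ⟨hz, rfl⟩ (iInf₂_le_of_le z' ⟨hz', rfl⟩ ?_)
  rw [hw.mdist_eq_of_adjacent_lengths hlf hz hz' hlt hadj]

theorem IsMasterRel.le_cAdj (hlf : LengthFactorial M) (hw : IsMasterRel M w1 w2) :
    ((max (card w1) (card w2) : ℕ) : ℕ∞) ≤ cAdj M := by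
  wlog hlt : card w1 < card w2 generalizing w1 w2
  · rw [max_comm]
    exact this hw.symm (by have := hw.2.2.1; omega)
  obtain ⟨x, hx⟩ := Associates.mk_surjective w1.prod
  have hF := hw.factorsOf_eq_pair hlf hx
  refine le_iSup_of_le x (le_sSup_of_le ⟨card w1, card w2, ⟨w1, by simp [hF], rfl⟩,
    ⟨w2, by simp [hF], rfl⟩, hlt, ?_, rfl⟩ ?_)
  · rintro j hj1 hj2 ⟨z, hz, rfl⟩
    rw [hF] at hz
    rcases hz with rfl | rfl <;> omega
  · exact le_iInf₂ fun z hz => le_iInf₂ fun z' hz' =>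
      Nat.cast_le.mpr <| hw.le_mdist hlf hz.1 hz'.1 fun h => hlt.ne (hz.2.symm.trans (h ▸ hz'.2))

end Factorizations

theorem stmt6 (hlf : LengthFactorial M)
    (w1 w2 : Multiset (Associates M)) (hw : IsMasterRel M w1 w2) :
    cCat M = (max (card w1) (card w2) : ℕ) ∧
      cMon M = (max (card w1) (card w2) : ℕ) ∧
      cAdj M = (max (card w1) (card w2) : ℕ) := by
  have hmon := hw.cMon_le hlf
  have hcat := hw.le_cCat hlf
  exact ⟨le_antisymm ((cCat_le_cMon M).trans hmon) hcat,
    le_antisymm hmon (hcat.trans (cCat_le_cMon M)),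
    le_antisymm (hw.cAdj_le hlf) (hw.le_cAdj hlf)⟩

end LF
end

section
/- Let M be a reduced torsion-free proper length-factorial monoid of finite rank r. Then M has exactly r + 1 atoms. -/
open Multiset

namespace LF

variable (M : Type*) [CancelCommMonoid M]

/-- A family `g` of elements of `M` is integrally independent: since the cancellative monoid
`M` embeds in its Grothendieck group `gp(M)`, a `ℤ`-linear relation among the `g i` in
`gp(M)`, split into positive part `p` and negative part `q`, amounts to an equality of
products `∏ gᵢ ^ pᵢ = ∏ gᵢ ^ qᵢ` in `M`.  The rank of `M` (the dimension of
`ℚ ⊗_ℤ gp(M)`) is the supremum of the sizes of integrally independent families in `M`. -/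
def IndepFamily {n : ℕ} (g : Fin n → M) : Prop :=
  ∀ p q : Fin n → ℕ, (∏ i, g i ^ p i) = (∏ i, g i ^ q i) → p = q

/-- `M` is torsion-free. -/
def TorsionFree : Prop := ∀ (n : ℕ) (x y : M), 0 < n → x ^ n = y ^ n → x = y

/-!
Let `A` be the set of atoms and `ψ : ℤ^(A) → gp(M)` the evaluation map. Length-factoriality says
that the length (degree) map is injective on `ker ψ`, and non-factoriality that `ker ψ ≠ 0`; hence
`ker ψ` has rank one, and there is an atom `a` such that no nonzero element of `ker ψ` vanishes at
`a`. The atoms other than `a` are then independent, so `#A - 1 ≤ r`. Conversely, every element of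
`M` lies in the image of `ψ`, so by rank-nullity an independent family has at most
`#A - rank (ker ψ) ≤ #A - 1` members, so `r ≤ #A - 1`.
-/

universe u

open Algebra (GrothendieckGroup)
open Cardinal

abbrev Atom := {a : M // Irreducible a}

section IntegerVectors

open scoped Classical

variable {ι : Type*}

noncomputable def toIntFinsupp : Multiset ι →+ (ι →₀ ℤ) :=
  (Finsupp.mapRange.addMonoidHom (Nat.castAddMonoidHom ℤ)).comp
    Multiset.toFinsupp.toAddMonoidHom

@[simp]
lemma toIntFinsupp_apply (s : Multiset ι) (i : ι) : toIntFinsupp s i = s.count i := by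
  simp [toIntFinsupp]

lemma toIntFinsupp_injective : Function.Injective (toIntFinsupp (ι := ι)) := by
  intro s t h
  ext i
  simpa using DFunLike.congr_fun h i

lemma exists_toIntFinsupp_sub_eq (v : ι →₀ ℤ) :
    ∃ s t : Multiset ι, toIntFinsupp s - toIntFinsupp t = v := by
  refine ⟨Multiset.toFinsupp.symm (v.mapRange Int.toNat rfl),
    Multiset.toFinsupp.symm ((-v).mapRange Int.toNat rfl), ?_⟩
  ext i
  simp

lemma linearCombination_toIntFinsupp {W : Type*} [AddCommGroup W] (w : ι → W)
    (s : Multiset ι) : Finsupp.linearCombination ℤ w (toIntFinsupp s) = (s.map w).sum := by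
  induction s using Multiset.induction with
  | empty => simp
  | cons a s ih =>
    rw [← Multiset.singleton_add, _root_.map_add, _root_.map_add, ih]
    simp [toIntFinsupp]

lemma degree_toIntFinsupp (s : Multiset ι) : (toIntFinsupp s).degree = card s := by
  induction s using Multiset.induction with
  | empty => simp
  | cons a s ih =>
    rw [← Multiset.singleton_add, _root_.map_add, _root_.map_add, ih]
    simp [toIntFinsupp, add_comm]

end IntegerVectors

lemma eq_zero_of_apply_eq_zero_of_mem {ι : Type*} {K : Submodule ℤ (ι →₀ ℤ)}
    (hK : ∀ v ∈ K, v.degree = 0 → v = 0) {k : ι →₀ ℤ} (hk : k ∈ K) {i : ι} (hki : k i ≠ 0)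
    {v : ι →₀ ℤ} (hv : v ∈ K) (hvi : v i = 0) : v = 0 := by
  have hw : k.degree • v - v.degree • k = 0 :=
    hK _ (sub_mem (K.smul_mem _ hv) (K.smul_mem _ hk)) (by simp [mul_comm])
  have : v.degree * k i = 0 := by simpa [hvi] using DFunLike.congr_fun hw i
  exact hK v hv ((mul_eq_zero.mp this).resolve_right hki)

theorem natCast_add_one_le_rank {R : Type*} {W V : Type u} [CommRing R] [IsDomain R]
    [AddCommGroup W] [Module R W] [Module.IsTorsionFree R W] [AddCommGroup V] [Module R V]
    (f : W →ₗ[R] V) (hf : LinearMap.ker f ≠ ⊥) {n : ℕ} {v : Fin n → V}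
    (hv : LinearIndependent R v) (hvf : ∀ i, v i ∈ LinearMap.range f) :
    (n : Cardinal) + 1 ≤ Module.rank R W := by
  rw [← f.rank_range_add_rank_ker]
  gcongr
  · have hv' : LinearIndependent R fun i => (⟨v i, hvf i⟩ : LinearMap.range f) :=
      LinearIndependent.of_comp (LinearMap.range f).subtype hv
    simpa using hv'.cardinal_lift_le_rank
  · obtain ⟨k, hk, hk0⟩ := Submodule.exists_mem_ne_zero_of_ne_bot hf
    rw [Cardinal.one_le_iff_pos, rank_pos_iff_exists_ne_zero]
    exact ⟨⟨k, hk⟩, by simpa using hk0⟩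

variable {M}

section Factorizations

variable [Subsingleton Mˣ]

noncomputable def mkMulEquiv : M ≃* Associates M :=
  .ofBijective Associates.mkMonoidHom ⟨Associates.mk_injective, Associates.mk_surjective⟩

lemma mkMulEquiv_apply (a : M) : mkMulEquiv a = Associates.mk a := rfl

lemma irreducible_mk_iff {a : M} : Irreducible (Associates.mk a) ↔ Irreducible a :=
  MulEquiv.irreducible_iff mkMulEquiv

lemma map_mk_mem_factorsOf (s : Multiset (Atom M)) :
    s.map (Associates.mk ∘ Subtype.val) ∈ FactorsOf M (s.map Subtype.val).prod := by
  refine ⟨fun b hb => ?_, ?_⟩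
  · obtain ⟨a, -, rfl⟩ := Multiset.mem_map.mp hb
    exact irreducible_mk_iff.mpr a.2
  · rw [← Multiset.map_map, Associates.prod_mk]

lemma exists_eq_map_mk_of_mem_factorsOf {x : M} {t : Multiset (Associates M)}
    (ht : t ∈ FactorsOf M x) :
    ∃ s : Multiset (Atom M), (s.map Subtype.val).prod = x ∧
      s.map (Associates.mk ∘ Subtype.val) = t := by
  obtain ⟨hirr, hprod⟩ := ht
  obtain ⟨u, rfl⟩ : ∃ u : Multiset M, u.map Associates.mk = t :=
    ⟨t.map mkMulEquiv.symm, by simp [Multiset.map_map, Function.comp_def, ← mkMulEquiv_apply]⟩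
  lift u to Multiset (Atom M) with s
  · intro a ha
    exact irreducible_mk_iff.mp (hirr _ (Multiset.mem_map_of_mem _ ha))
  refine ⟨s, Associates.mk_injective ?_, (Multiset.map_map _ _ _).symm⟩
  rw [← hprod, Associates.prod_mk]

lemma Atomic.exists_prod_eq (hat : Atomic M) (x : M) :
    ∃ s : Multiset (Atom M), (s.map Subtype.val).prod = x := by
  by_cases hx : IsUnit x
  · exact ⟨0, by simp [isUnit_iff_eq_one.mp hx]⟩
  · obtain ⟨t, ht⟩ := hat x hx
    obtain ⟨s, hs, -⟩ := exists_eq_map_mk_of_mem_factorsOf ht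
    exact ⟨s, hs⟩

lemma LengthFactorial.eq_of_prod_eq (hlf : LengthFactorial M) {s t : Multiset (Atom M)}
    (hprod : (s.map Subtype.val).prod = (t.map Subtype.val).prod) (hcard : card s = card t) :
    s = t := by
  have hs := map_mk_mem_factorsOf s
  have ht := map_mk_mem_factorsOf t
  rw [← hprod] at ht
  refine Multiset.map_injective (Associates.mk_injective.comp Subtype.val_injective)
    (hlf _ _ hs _ ht ?_)
  simpa using hcard

lemma exists_ne_of_not_factorial (hat : Atomic M) (hnf : ¬ Factorial M) :
    ∃ s t : Multiset (Atom M), (s.map Subtype.val).prod = (t.map Subtype.val).prod ∧ s ≠ t := by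
  obtain ⟨x, hx⟩ := not_forall.mp hnf
  obtain ⟨s, rfl⟩ := hat.exists_prod_eq x
  obtain ⟨t', ht', hne⟩ : ∃ t' ∈ FactorsOf M (s.map Subtype.val).prod,
      t' ≠ s.map (Associates.mk ∘ Subtype.val) := by
    by_contra! h
    exact hx ⟨_, map_mk_mem_factorsOf s, h⟩
  obtain ⟨t, hprod, rfl⟩ := exists_eq_map_mk_of_mem_factorsOf ht'
  exact ⟨s, t, hprod.symm, fun h => hne (h ▸ rfl)⟩

end Factorizations

section GrothendieckGroup

noncomputable def toGp (x : M) : Additive (GrothendieckGroup M) :=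
  .ofMul (GrothendieckGroup.of x)

lemma toGp_injective : Function.Injective (toGp (M := M)) :=
  Additive.ofMul.injective.comp GrothendieckGroup.of_injective

lemma toGp_multiset_prod (s : Multiset M) : toGp s.prod = (s.map toGp).sum := by
  rw [toGp, map_multiset_prod, ofMul_multiset_prod, Multiset.map_map]
  rfl

lemma toGp_prod_pow {n : ℕ} (g : Fin n → M) (p : Fin n → ℕ) :
    toGp (∏ i, g i ^ p i) = ∑ i, (p i : ℤ) • toGp (g i) := by
  simp [toGp, map_prod, ofMul_prod, natCast_zsmul]

theorem indepFamily_iff_linearIndependent {n : ℕ} (g : Fin n → M) :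
    IndepFamily M g ↔ LinearIndependent ℤ (toGp ∘ g) := by
  rw [Fintype.linearIndependent_iff]
  constructor
  · intro hg c hc i
    have hsplit : ∏ i, g i ^ (c i).toNat = ∏ i, g i ^ (-c i).toNat := by
      refine toGp_injective ?_
      rw [toGp_prod_pow, toGp_prod_pow, ← sub_eq_zero, ← Finset.sum_sub_distrib, ← hc]
      refine Finset.sum_congr rfl fun i _ => ?_
      rw [← sub_smul, Int.toNat_sub_toNat_neg, Function.comp_apply]
    have := congrFun (hg _ _ hsplit) i
    omega
  · intro hg p q hpq
    funext i
    have := hg (fun i => (p i : ℤ) - q i) (by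
      simp only [Function.comp_apply, sub_smul, Finset.sum_sub_distrib, ← toGp_prod_pow, hpq,
        sub_self]) i
    omega

theorem mk_le_of_linearIndependent {r : ℕ} (hdep : ∀ g : Fin (r + 1) → M, ¬ IndepFamily M g)
    {ι : Type*} {u : ι → M} (hu : LinearIndependent ℤ (toGp ∘ u)) : #ι ≤ r := by
  by_contra! h
  obtain ⟨e⟩ : Nonempty (Fin (r + 1) ↪ ι) := by
    rw [← lift_mk_le', lift_mk_fin, lift_uzero, Nat.cast_succ, natCast_add_one_le_iff]
    exact h
  exact hdep (u ∘ e) ((indepFamily_iff_linearIndependent _).2 (hu.comp e e.injective))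

end GrothendieckGroup

section AtomEval

noncomputable def atomEval : (Atom M →₀ ℤ) →ₗ[ℤ] Additive (GrothendieckGroup M) :=
  Finsupp.linearCombination ℤ fun a => toGp (a : M)

lemma atomEval_toIntFinsupp (s : Multiset (Atom M)) :
    atomEval (toIntFinsupp s) = toGp (s.map Subtype.val).prod := by
  rw [atomEval, linearCombination_toIntFinsupp, toGp_multiset_prod, Multiset.map_map]
  rfl

lemma sub_mem_ker_atomEval_iff {s t : Multiset (Atom M)} :
    toIntFinsupp s - toIntFinsupp t ∈ LinearMap.ker atomEval ↔
      (s.map Subtype.val).prod = (t.map Subtype.val).prod := by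
  rw [LinearMap.mem_ker, map_sub, sub_eq_zero, atomEval_toIntFinsupp, atomEval_toIntFinsupp,
    toGp_injective.eq_iff]

variable [Subsingleton Mˣ]

lemma toGp_mem_range_atomEval (hat : Atomic M) (x : M) :
    toGp x ∈ LinearMap.range (atomEval (M := M)) := by
  obtain ⟨s, rfl⟩ := hat.exists_prod_eq x
  exact ⟨_, atomEval_toIntFinsupp s⟩

lemma LengthFactorial.eq_zero_of_mem_ker_atomEval (hlf : LengthFactorial M)
    {v : Atom M →₀ ℤ} (hv : v ∈ LinearMap.ker atomEval) (hdeg : v.degree = 0) : v = 0 := by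
  obtain ⟨s, t, rfl⟩ := exists_toIntFinsupp_sub_eq v
  rw [map_sub, degree_toIntFinsupp, degree_toIntFinsupp, sub_eq_zero, Nat.cast_inj] at hdeg
  rw [hlf.eq_of_prod_eq (sub_mem_ker_atomEval_iff.mp hv) hdeg, sub_self]

lemma ker_atomEval_ne_bot (hat : Atomic M) (hnf : ¬ Factorial M) :
    LinearMap.ker (atomEval (M := M)) ≠ ⊥ := by
  obtain ⟨s, t, hprod, hne⟩ := exists_ne_of_not_factorial hat hnf
  refine (Submodule.ne_bot_iff _).mpr ⟨_, sub_mem_ker_atomEval_iff.mpr hprod, ?_⟩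
  rw [sub_ne_zero]
  exact toIntFinsupp_injective.ne hne

lemma LengthFactorial.linearIndepOn_compl_singleton (hlf : LengthFactorial M)
    {k : Atom M →₀ ℤ} (hk : k ∈ LinearMap.ker atomEval) {a : Atom M} (hka : k a ≠ 0) :
    LinearIndepOn ℤ (fun b : Atom M => toGp (b : M)) {a}ᶜ := by
  rw [linearIndepOn_iff]
  intro l hl hl0
  refine eq_zero_of_apply_eq_zero_of_mem (fun v hv => hlf.eq_zero_of_mem_ker_atomEval hv) hk hka
    hl0 ?_
  simpa using (Finsupp.mem_supported' ℤ l).mp hl a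

end AtomEval

theorem stmt11_general (r : ℕ)
    (hred : ∀ u : M, IsUnit u → u = 1)
    (hat : Atomic M) (hlf : LengthFactorial M) (hnf : ¬ Factorial M)
    (hrank : (∃ g : Fin r → M, IndepFamily M g) ∧
      ∀ g : Fin (r + 1) → M, ¬ IndepFamily M g) :
    Nat.card {a : M // Irreducible a} = r + 1 := by
  have : Subsingleton Mˣ :=
    ⟨fun u v => Units.ext <| (hred _ u.isUnit).trans (hred _ v.isUnit).symm⟩
  obtain ⟨⟨g, hg⟩, hdep⟩ := hrank
  have hker := ker_atomEval_ne_bot hat hnf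
  obtain ⟨k, hk, hk0⟩ := Submodule.exists_mem_ne_zero_of_ne_bot hker
  obtain ⟨a, ha⟩ : ∃ a, k a ≠ 0 := by simpa [Finsupp.ext_iff] using hk0
  have hupper : #(Atom M) ≤ r + 1 := by
    classical
    rw [← (Equiv.optionSubtypeNe a).cardinal_eq, mk_option]
    gcongr
    exact mk_le_of_linearIndependent hdep (hlf.linearIndepOn_compl_singleton hk ha)
  have hlower : (r : Cardinal) + 1 ≤ #(Atom M) := by
    rw [← lift_uzero #(Atom M), ← rank_finsupp_self ℤ]
    exact natCast_add_one_le_rank atomEval hker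
      ((indepFamily_iff_linearIndependent g).mp hg) fun i => toGp_mem_range_atomEval hat (g i)
  rw [Nat.card, le_antisymm hupper hlower, ← Nat.cast_add_one, toNat_natCast]

/-- A reduced torsion-free proper length-factorial monoid of finite rank `r`
has exactly `r + 1` atoms. -/
theorem stmt11 (r : ℕ)
    (hred : ∀ u : M, IsUnit u → u = 1) (htf : TorsionFree M)
    (hat : Atomic M) (hlf : LengthFactorial M) (hnf : ¬ Factorial M)
    (hrank : (∃ g : Fin r → M, IndepFamily M g) ∧
      ∀ g : Fin (r + 1) → M, ¬ IndepFamily M g) :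
    Nat.card {a : M // Irreducible a} = r + 1 :=
  stmt11_general r hred hat hlf hnf hrank

end LF
end
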